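/- Let ψ : X1 → X2 be a spectral map of spectral spaces, and let φ1 : X1 → 𝒳(X1), φ2 : X2 → 𝒳(X2) be the canonical embeddings x ↦ {x}^gen. Then the map 𝒳(ψ) : 𝒳(X1) → 𝒳(X2) defined by 𝒳(ψ)(C) := ψ(C)^gen is well-defined (i.e., ψ(C)^gen ∈ 𝒳(X2) for every C ∈ 𝒳(X1)) and spectral, it satisfies 𝒳(ψ) ∘ φ1 = φ2 ∘ ψ, and for every quasi-compact open subset Ω of X2 one has (𝒳(ψ))⁻¹(𝒰(Ω)) = 𝒰(ψ⁻¹(Ω)). -/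

import Mathlib

open Set TopologicalSpace Topology

/-- A subset of a topological space is *inverse-closed* if it is an intersection of a
family of quasi-compact open subsets. -/
def InvClosed {X : Type*} [TopologicalSpace X] (Y : Set X) : Prop :=
  ∃ 𝒪 : Set (Set X), (∀ U ∈ 𝒪, IsOpen U ∧ IsCompact U) ∧ Y = ⋂₀ 𝒪

/-- A subset is *saturated* if it is an intersection of open sets. -/
def IsSatd {X : Type*} [TopologicalSpace X] (Y : Set X) : Prop :=
  ∃ 𝒪 : Set (Set X), (∀ U ∈ 𝒪, IsOpen U) ∧ Y = ⋂₀ 𝒪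

/-- A topological space is *spectral* if it is T0, quasi-compact, sober, and the
quasi-compact open subsets form a basis closed under finite intersections. -/
def IsSpectralSpace (X : Type*) [TopologicalSpace X] : Prop :=
  T0Space X ∧ CompactSpace X ∧ QuasiSober X ∧
    IsTopologicalBasis {U : Set X | IsOpen U ∧ IsCompact U} ∧
    ∀ U V : Set X, IsOpen U → IsCompact U → IsOpen V → IsCompact V → IsCompact (U ∩ V)

/-- `𝒳(X)`: the nonempty inverse-closed subsets of `X`. -/
abbrev XCal (X : Type*) [TopologicalSpace X] : Type _ :=
  {Y : Set X // Y.Nonempty ∧ InvClosed Y}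

/-- The Zariski topology on `𝒳(X)`, with basic open sets `𝒰(Ω) = {Y : Y ⊆ Ω}` for `Ω`
quasi-compact open in `X`. -/
instance XCal.instTop (X : Type*) [TopologicalSpace X] : TopologicalSpace (XCal X) :=
  generateFrom {S : Set (XCal X) | ∃ Ω : Set X, IsOpen Ω ∧ IsCompact Ω ∧
    S = {Y : XCal X | (Y : Set X) ⊆ Ω}}

/-- The specialization-type order: `x ≤ y` iff `y ∈ closure {x}`. -/
def spord {X : Type*} [TopologicalSpace X] (x y : X) : Prop := y ∈ closure {x}

/-- Closure under generizations of a set `S`: all points `z ≤ s` for some `s ∈ S`. -/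
def genOf {X : Type*} [TopologicalSpace X] (S : Set X) : Set X :=
  {z : X | ∃ s ∈ S, spord z s}

/-- A map is *spectral* if preimages of quasi-compact open sets are quasi-compact open. -/
def SpecMap {X Y : Type*} [TopologicalSpace X] [TopologicalSpace Y] (f : X → Y) : Prop :=
  ∀ Ω : Set Y, IsOpen Ω → IsCompact Ω → IsOpen (f ⁻¹' Ω) ∧ IsCompact (f ⁻¹' Ω)

/-- The constructible topology on a spectral space: generated by the quasi-compact open
sets together with their complements. -/
def constructibleTop (X : Type*) [TopologicalSpace X] : TopologicalSpace X :=
  generateFrom ({U : Set X | IsOpen U ∧ IsCompact U} ∪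
    {S : Set X | ∃ U : Set X, IsOpen U ∧ IsCompact U ∧ S = Uᶜ})

/-- `s` is the supremum of `S` for the order induced by the topology. -/
def IsSupOf {X : Type*} [TopologicalSpace X] (S : Set X) (s : X) : Prop :=
  (∀ c ∈ S, spord c s) ∧ ∀ t : X, (∀ c ∈ S, spord c t) → spord s t

/-- A map is sup-preserving if it sends existing finite suprema to suprema. -/
def SupPreserving {X Y : Type*} [TopologicalSpace X] [TopologicalSpace Y] (f : X → Y) : Prop :=
  ∀ F : Set X, F.Finite → ∀ s : X, IsSupOf F s → IsSupOf (f '' F) (f s)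

/-- A map is open onto its image. -/
def OpenOntoImage {X Y : Type*} [TopologicalSpace X] [TopologicalSpace Y] (f : X → Y) : Prop :=
  ∀ V : Set X, IsOpen V → ∃ W : Set Y, IsOpen W ∧ f '' V = W ∩ Set.range f

/-! The generization closure `genOf` is `nhdsKer`. An inverse-closed set is closed in the
constructible topology, which is compact on a spectral space, so it is quasi-compact; hence so is
`ψ(C)`, and in a prespectral space the generization closure of a quasi-compact set is the
intersection of the quasi-compact opens containing it. For `Ω` open, `ψ(C)^gen ⊆ Ω ↔ C ⊆ ψ⁻¹(Ω)`,
which is the preimage formula. Each `𝒰(Ω)` is quasi-compact, being the set of generizations of the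
point `Ω` of `𝒳(X)`, and the `𝒰(Ω)` form a basis, so `𝒳(ψ)` is spectral. -/

theorem IsSpectralSpace.spectralSpace {X : Type*} [TopologicalSpace X] (hX : IsSpectralSpace X) :
    SpectralSpace X :=
  have ⟨hT0, hcompact, hsober, hbasis, hinter⟩ := hX
  { toT0Space := hT0, toCompactSpace := hcompact, toQuasiSober := hsober,
    toQuasiSeparatedSpace := ⟨hinter⟩, toPrespectralSpace := ⟨hbasis⟩ }

section General

variable {X Y : Type*} [TopologicalSpace X] [TopologicalSpace Y]

theorem SpecMap.isSpectralMap [PrespectralSpace Y] {f : X → Y} (hf : SpecMap f) :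
    IsSpectralMap f where
  isOpen_preimage := (PrespectralSpace.isTopologicalBasis.continuous_iff.2
    fun U hU => (hf U hU.1 hU.2).1).isOpen_preimage
  isCompact_preimage_of_isOpen U hUo hUc := (hf U hUo hUc).2

theorem TopologicalSpace.IsTopologicalBasis.isCompact_preimage {f : X → Y} {B : Set (Set Y)}
    (hB : IsTopologicalBasis B) (hf : ∀ b ∈ B, IsCompact (f ⁻¹' b)) {S : Set Y}
    (hSc : IsCompact S) (hSo : IsOpen S) : IsCompact (f ⁻¹' S) := by
  have hB' : IsTopologicalBasis (range ((↑) : B → Set Y)) := by rwa [Subtype.range_coe]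
  obtain ⟨s, hs, rfl⟩ := eq_finite_iUnion_of_isTopologicalBasis_of_isCompact_open _ hB' S hSc hSo
  rw [preimage_iUnion₂]
  exact hs.isCompact_biUnion fun b _ => hf b b.2

theorem specMap_of_isTopologicalBasis {f : X → Y} {B : Set (Set Y)} (hB : IsTopologicalBasis B)
    (hf : ∀ b ∈ B, IsOpen (f ⁻¹' b) ∧ IsCompact (f ⁻¹' b)) : SpecMap f := fun S hSo hSc =>
  ⟨(hB.continuous_iff.2 fun b hb => (hf b hb).1).isOpen_preimage S hSo,
    hB.isCompact_preimage (fun b hb => (hf b hb).2) hSc hSo⟩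

theorem genOf_eq_nhdsKer (S : Set X) : genOf S = nhdsKer S := by
  ext z
  simp [genOf, spord, mem_nhdsKer_iff_specializes, specializes_iff_mem_closure]

theorem nhdsKer_image_nhdsKer {f : X → Y} (hf : Continuous f) (S : Set X) :
    nhdsKer (f '' nhdsKer S) = nhdsKer (f '' S) := by
  refine (nhdsKer_mono (image_mono subset_nhdsKer)).antisymm' ?_
  have : f '' nhdsKer S ⊆ nhdsKer (f '' S) := by
    rintro _ ⟨x, hx, rfl⟩
    obtain ⟨s, hs, hxs⟩ := mem_nhdsKer_iff_specializes.1 hx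
    exact mem_nhdsKer_iff_specializes.2 ⟨f s, mem_image_of_mem f hs, hxs.map hf⟩
  simpa using nhdsKer_mono this

theorem constructibleTopology_le [PrespectralSpace X] :
    constructibleTopology X ≤ ‹TopologicalSpace X› := by
  intro U hU
  obtain ⟨B, hB, rfl⟩ := PrespectralSpace.isTopologicalBasis.open_eq_sUnion hU
  exact @isOpen_sUnion X (constructibleTopology X) B fun V hV =>
    (hB hV).2.isOpen_constructibleTopology_of_isOpen (hB hV).1

theorem isCompact_sInter_of_isOpen_isCompact [CompactSpace X] [QuasiSober X] [PrespectralSpace X]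
    [QuasiSeparatedSpace X] {𝒪 : Set (Set X)}
    (h𝒪 : ∀ U ∈ 𝒪, IsOpen U ∧ IsCompact U) : IsCompact (⋂₀ 𝒪) := by
  let e : WithConstructibleTopology X → X := WithTopology.ofTopology
  have he : Continuous e :=
    ⟨fun U hU => WithConstructibleTopology.isOpen_iff.2 (constructibleTopology_le U hU)⟩
  have hclosed : IsClosed (e ⁻¹' ⋂₀ 𝒪) :=
    WithConstructibleTopology.isClosed_iff.2 <| @isClosed_sInter X (constructibleTopology X) 𝒪
      fun U hU => @IsClosed.mk X (constructibleTopology X) U <|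
        IsCompact.isOpen_constructibleTopology_of_isClosed (by simpa using (h𝒪 U hU).2)
          (h𝒪 U hU).1.isClosed_compl
  rw [← image_preimage_eq (⋂₀ 𝒪) (WithTopology.ofTopology_surjective _)]
  exact hclosed.isCompact.image he

theorem InvClosed.isCompact [CompactSpace X] [QuasiSober X] [PrespectralSpace X]
    [QuasiSeparatedSpace X] {C : Set X} (hC : InvClosed C) : IsCompact C := by
  obtain ⟨𝒪, h𝒪, rfl⟩ := hC
  exact isCompact_sInter_of_isOpen_isCompact h𝒪

theorem nhdsKer_eq_sInter_isOpen_isCompact [PrespectralSpace X] {K : Set X} (hK : IsCompact K) :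
    nhdsKer K = ⋂₀ {U | IsOpen U ∧ IsCompact U ∧ K ⊆ U} := by
  refine (subset_sInter fun U hU => nhdsKer_minimal hU.2.2 hU.1).antisymm ?_
  rw [nhdsKer_def]
  refine subset_sInter fun V ⟨hVo, hKV⟩ => ?_
  obtain ⟨W, hWc, hWo, hKW, hWV⟩ :=
    PrespectralSpace.exists_isCompact_and_isOpen_between hK hVo hKV
  exact fun x hx => hWV (hx W ⟨hWo, hWc, hKW⟩)

theorem invClosed_genOf [PrespectralSpace X] {K : Set X} (hK : IsCompact K) :
    InvClosed (genOf K) :=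
  ⟨{U | IsOpen U ∧ IsCompact U ∧ K ⊆ U}, fun _ hU => ⟨hU.1, hU.2.1⟩, by
    rw [genOf_eq_nhdsKer, nhdsKer_eq_sInter_isOpen_isCompact hK]⟩

end General

namespace XCal

variable {X X₁ X₂ : Type*} [TopologicalSpace X] [TopologicalSpace X₁] [TopologicalSpace X₂]

/-- The basic open set `𝒰(Ω)`. -/
def basicOpen (Ω : Set X) : Set (XCal X) := {Y | (Y : Set X) ⊆ Ω}

theorem isOpen_basicOpen {Ω : Set X} (hΩo : IsOpen Ω) (hΩc : IsCompact Ω) :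
    IsOpen (basicOpen Ω) :=
  isOpen_generateFrom_of_mem ⟨Ω, hΩo, hΩc, rfl⟩

theorem isTopologicalBasis [CompactSpace X] [QuasiSeparatedSpace X] :
    IsTopologicalBasis {S : Set (XCal X) | ∃ Ω, IsOpen Ω ∧ IsCompact Ω ∧ S = basicOpen Ω} :=
  isTopologicalBasis_of_subbasis_of_finiteInter rfl
    { univ_mem := ⟨univ, isOpen_univ, isCompact_univ, by simp [basicOpen]⟩
      inter_mem := by
        rintro _ ⟨Ω₁, h₁o, h₁c, rfl⟩ _ ⟨Ω₂, h₂o, h₂c, rfl⟩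
        exact ⟨Ω₁ ∩ Ω₂, h₁o.inter h₂o, QuasiSeparatedSpace.inter_isCompact _ _ h₁o h₁c h₂o h₂c,
          by ext; simp [basicOpen]⟩ }

theorem specializes_of_subset {Y Z : XCal X} (h : (Y : Set X) ⊆ Z) : Y ⤳ Z := by
  change 𝓝 Y ≤ 𝓝 Z
  rw [nhds_generateFrom, nhds_generateFrom]
  refine biInf_mono ?_
  rintro _ ⟨hZ, Ω, hΩo, hΩc, rfl⟩
  exact ⟨h.trans hZ, Ω, hΩo, hΩc, rfl⟩

theorem isCompact_basicOpen {Ω : Set X} (hΩo : IsOpen Ω) (hΩc : IsCompact Ω) :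
    IsCompact (basicOpen Ω) := by
  rcases Ω.eq_empty_or_nonempty with rfl | hne
  · convert isCompact_empty
    ext Y
    simpa [basicOpen] using Y.2.1.ne_empty
  · let Ω' : XCal X := ⟨Ω, hne, {Ω}, by simpa using ⟨hΩo, hΩc⟩, (sInter_singleton Ω).symm⟩
    have : basicOpen Ω = nhdsKer {Ω'} := by
      ext Y
      rw [mem_nhdsKer_singleton]
      exact ⟨fun h => specializes_of_subset h,
        fun h => h.mem_open (isOpen_basicOpen hΩo hΩc) (subset_refl Ω)⟩
    rw [this]
    exact isCompact_singleton.nhdsKer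

theorem nonempty_and_invClosed_genOf_image [CompactSpace X₁] [QuasiSober X₁]
    [PrespectralSpace X₁] [QuasiSeparatedSpace X₁] [PrespectralSpace X₂] {ψ : X₁ → X₂}
    (hψ : Continuous ψ) (C : XCal X₁) :
    (genOf (ψ '' C)).Nonempty ∧ InvClosed (genOf (ψ '' C)) :=
  ⟨genOf_eq_nhdsKer (ψ '' C) ▸ (C.2.1.image ψ).mono subset_nhdsKer,
    invClosed_genOf (C.2.2.isCompact.image hψ)⟩

variable {ψ : X₁ → X₂} {Ψ : XCal X₁ → XCal X₂}

theorem preimage_basicOpen (hΨ : ∀ C, (Ψ C : Set X₂) = genOf (ψ '' C)) {Ω : Set X₂}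
    (hΩ : IsOpen Ω) : Ψ ⁻¹' basicOpen Ω = basicOpen (ψ ⁻¹' Ω) := by
  ext C
  simp only [mem_preimage, basicOpen, mem_ofPred_eq, hΨ, genOf_eq_nhdsKer, hΩ.nhdsKer_subset,
    image_subset_iff]

theorem specMap_of_coe_eq_genOf [CompactSpace X₂] [QuasiSeparatedSpace X₂] (hψ : SpecMap ψ)
    (hΨ : ∀ C, (Ψ C : Set X₂) = genOf (ψ '' C)) : SpecMap Ψ := by
  refine specMap_of_isTopologicalBasis isTopologicalBasis ?_
  rintro _ ⟨Ω, hΩo, hΩc, rfl⟩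
  rw [preimage_basicOpen hΨ hΩo]
  exact ⟨isOpen_basicOpen (hψ Ω hΩo hΩc).1 (hψ Ω hΩo hΩc).2,
    isCompact_basicOpen (hψ Ω hΩo hΩc).1 (hψ Ω hΩo hΩc).2⟩

end XCal

/-- For a spectral map `ψ : X₁ → X₂` of spectral spaces, the map
`𝒳(ψ) : C ↦ ψ(C)^gen` is well defined and spectral, satisfies
`𝒳(ψ) ∘ φ₁ = φ₂ ∘ ψ`, and `(𝒳(ψ))⁻¹(𝒰(Ω)) = 𝒰(ψ⁻¹(Ω))` for every quasi-compact
open `Ω ⊆ X₂`. -/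
theorem stmt12 {X₁ X₂ : Type*} [TopologicalSpace X₁] [TopologicalSpace X₂]
    (hX₁ : IsSpectralSpace X₁) (hX₂ : IsSpectralSpace X₂)
    (ψ : X₁ → X₂) (hψ : SpecMap ψ) :
    (∀ C : XCal X₁, (genOf (ψ '' (C : Set X₁))).Nonempty ∧
      InvClosed (genOf (ψ '' (C : Set X₁)))) ∧
    ∀ Ψ : XCal X₁ → XCal X₂,
      (∀ C : XCal X₁, (Ψ C : Set X₂) = genOf (ψ '' (C : Set X₁))) →
      SpecMap Ψ ∧
      (∀ (x : X₁) (C : XCal X₁) (D : XCal X₂),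
        (C : Set X₁) = genOf {x} → (D : Set X₂) = genOf {ψ x} → Ψ C = D) ∧
      (∀ Ω : Set X₂, IsOpen Ω → IsCompact Ω →
        Ψ ⁻¹' {Y : XCal X₂ | (Y : Set X₂) ⊆ Ω} =
          {Y : XCal X₁ | (Y : Set X₁) ⊆ ψ ⁻¹' Ω}) := by
  have := hX₁.spectralSpace
  have := hX₂.spectralSpace
  have hψc : Continuous ψ := hψ.isSpectralMap.continuous
  refine ⟨XCal.nonempty_and_invClosed_genOf_image hψc, fun Ψ hΨ =>
    ⟨XCal.specMap_of_coe_eq_genOf hψ hΨ, fun x C D hC hD => ?_,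
      fun Ω hΩo _ => XCal.preimage_basicOpen hΨ hΩo⟩⟩
  apply Subtype.ext
  rw [hΨ, hC, hD, genOf_eq_nhdsKer, genOf_eq_nhdsKer, genOf_eq_nhdsKer, nhdsKer_image_nhdsKer hψc,
    image_singleton]
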